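/- Let G and H be r-uniform hypergraphs such that: (i) G has s vertices, H has n vertices, and s divides n; (ii) G has m edges and each edge of G intersects at most d other edges of G; (iii) each vertex of H has degree at least (1−x)·C(n−1, r−1) for some number x. If x < 1/(e·(d + 1 + r²·m/s)), where e is Euler's number, then H has a perfect G-packing. -/

import Mathlib

open Finset

/-- `H` (an `r`-uniform hypergraph with vertex type `β` and edge set `E_H`) has a perfect
`G`-packing (`G` with vertex type `α` and edge set `E_G`): there are vertex-disjoint
subhypergraphs of `H`, each isomorphic to `G` (given by injections `g t : α ↪ β` whose
images partition the vertex set of `H` and which carry every edge of `G` to an edge of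
`H`). -/
def HasPerfectPacking {α β : Type*} [DecidableEq β]
    (E_G : Finset (Finset α)) (E_H : Finset (Finset β)) : Prop :=
  ∃ (k : ℕ) (g : Fin k → (α ↪ β)),
    (∀ t t', t ≠ t' → ∀ a a', g t a ≠ g t' a') ∧
    (∀ b : β, ∃ t a, g t a = b) ∧
    (∀ t, ∀ F ∈ E_G, F.map (g t) ∈ E_H)

/-!
Place `q = n / s` copies of `G` on the vertices of `H` by a uniformly random bijection
`σ : Fin q × α ≃ β`. The bad events are that copy `t` sends an edge `F` of `G` exactly onto an
`r`-set `N` that is not an edge of `H`; each has probability `1 / C(n, r)`. Composing `σ` with a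
permutation of `β` that moves `N` onto another `r`-set and fixes everything else outside both
shows that such an event stays this unlikely given that any events with disjoint positions and
disjoint targets are avoided, so the lopsided local lemma applies. The minimum degree condition
leaves at most `x C(n-1, r-1)` nonedges through each vertex, hence at most `x C(n, r)` nonedges,
and so at most `x C(n, r) (d + 1 + r² m / s)` events conflicting with a given one; this is what
`e p (D + 1) < 1` needs.
-/

section LocalLemma

variable {Ω ι : Type*} [Fintype Ω] [DecidableEq Ω]

def avoidSet (A : ι → Finset Ω) (S : Finset ι) : Finset Ω :=
  {ω | ∀ j ∈ S, ω ∉ A j}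

variable {A : ι → Finset Ω}

@[simp]
lemma mem_avoidSet {ω : Ω} {S : Finset ι} : ω ∈ avoidSet A S ↔ ∀ j ∈ S, ω ∉ A j := by
  simp [avoidSet]

lemma avoidSet_empty : avoidSet A ∅ = univ := by
  simp [avoidSet]

lemma avoidSet_anti {S T : Finset ι} (h : S ⊆ T) : avoidSet A T ⊆ avoidSet A S :=
  fun _ hω => mem_avoidSet.mpr fun j hj => mem_avoidSet.mp hω j (h hj)

lemma avoidSet_inter_eq_empty {j : ι} {S : Finset ι} (hj : j ∈ S) :
    avoidSet A S ∩ A j = ∅ :=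
  eq_empty_of_forall_notMem fun _ hω =>
    mem_avoidSet.mp (mem_inter.mp hω).1 j hj (mem_inter.mp hω).2

variable [DecidableEq ι]

lemma avoidSet_insert (j : ι) (S : Finset ι) :
    avoidSet A (insert j S) = avoidSet A S \ A j := by
  ext ω
  simp only [mem_avoidSet, mem_insert, forall_eq_or_imp, mem_sdiff]
  tauto

lemma card_avoidSet_insert (j : ι) (S : Finset ι) :
    (#(avoidSet A (insert j S)) : ℝ) = #(avoidSet A S) - #(avoidSet A S ∩ A j) := by
  rw [avoidSet_insert, ← card_sdiff_add_card_inter (avoidSet A S) (A j)]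
  push_cast
  ring

lemma pow_mul_card_avoidSet_le {x : ℝ} (hx : x ≤ 1) {U T : Finset ι} (hUT : Disjoint U T)
    (h : ∀ j ∈ T, ∀ V, U ⊆ V → V ⊆ U ∪ T → j ∉ V →
      (#(avoidSet A V ∩ A j) : ℝ) ≤ x * #(avoidSet A V)) :
    (1 - x) ^ #T * #(avoidSet A U) ≤ #(avoidSet A (U ∪ T)) := by
  induction T using Finset.induction_on with
  | empty => simp
  | @insert j T hjT ih =>
    have hjU : j ∉ U := disjoint_right.mp hUT (mem_insert_self j T)
    have hUT' : Disjoint U T := disjoint_of_subset_right (subset_insert j T) hUT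
    have ih := ih hUT' fun k hk V hUV hV => h k (mem_insert_of_mem hk) V hUV
      (hV.trans (union_subset_union_right (subset_insert j T)))
    have hj := h j (mem_insert_self j T) (U ∪ T) subset_union_left
      (union_subset_union_right (subset_insert j T)) (by simp [hjU, hjT])
    rw [union_insert, card_avoidSet_insert, card_insert_of_notMem hjT, pow_succ]
    nlinarith

theorem card_avoidSet_inter_le_of_lopsided (ℐ : Finset ι) (Γ : ι → Finset ι) {p x : ℝ}
    (hx0 : 0 ≤ x) (hx1 : x ≤ 1) (hpx : ∀ i ∈ ℐ, p ≤ x * (1 - x) ^ #((Γ i).erase i))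
    (hA : ∀ i ∈ ℐ, ∀ S ⊆ ℐ, Disjoint S (Γ i) →
      (#(avoidSet A S ∩ A i) : ℝ) ≤ p * #(avoidSet A S)) :
    ∀ S ⊆ ℐ, ∀ i ∈ ℐ, (#(avoidSet A S ∩ A i) : ℝ) ≤ x * #(avoidSet A S) := by
  intro S
  induction S using Finset.strongInduction with
  | H S ih =>
  intro hS i hi
  by_cases hiS : i ∈ S
  · simp [avoidSet_inter_eq_empty hiS, mul_nonneg hx0 (Nat.cast_nonneg _)]
  set S₁ := S.filter (· ∈ Γ i)
  set S₂ := S.filter (· ∉ Γ i)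
  have hS₂₁ : S₂ ∪ S₁ = S := by rw [union_comm]; exact filter_union_filter_not_eq _ S
  have hS₁ : #S₁ ≤ #((Γ i).erase i) :=
    card_le_card fun j hj => mem_erase.mpr
      ⟨fun h => hiS (h ▸ (mem_filter.mp hj).1), (mem_filter.mp hj).2⟩
  have hpeel : (1 - x) ^ #S₁ * #(avoidSet A S₂) ≤ #(avoidSet A S) := by
    have := pow_mul_card_avoidSet_le (A := A) (U := S₂) (T := S₁) hx1
      (disjoint_filter_filter_not S S _).symm
      fun j hj V _ hV hjV => by
        rw [hS₂₁] at hV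
        have hVS : V ⊂ S :=
          ssubset_of_subset_of_ne hV (ne_of_mem_of_not_mem' (mem_filter.mp hj).1 hjV).symm
        exact ih V hVS (hV.trans hS) j (hS (mem_filter.mp hj).1)
    rwa [hS₂₁] at this
  calc (#(avoidSet A S ∩ A i) : ℝ) ≤ #(avoidSet A S₂ ∩ A i) := by
        gcongr; exact avoidSet_anti (filter_subset _ S)
    _ ≤ p * #(avoidSet A S₂) :=
        hA i hi S₂ ((filter_subset _ S).trans hS)
          (disjoint_left.mpr fun _ hj => (mem_filter.mp hj).2)
    _ ≤ x * (1 - x) ^ #S₁ * #(avoidSet A S₂) := by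
        gcongr
        exact (hpx i hi).trans
          (mul_le_mul_of_nonneg_left (pow_le_pow_of_le_one (by linarith) (by linarith) hS₁) hx0)
    _ ≤ x * #(avoidSet A S) := by rw [mul_assoc]; gcongr

lemma exp_neg_one_le_one_sub_pow {y : ℝ} {k : ℕ} (hyk : y * (k + 1) ≤ 1) :
    Real.exp (-1) ≤ (1 - y) ^ k := by
  have hk : (0 : ℝ) < k + 1 := by positivity
  have h1 : ((1 + (k : ℝ)⁻¹) ^ k)⁻¹ = (1 - 1 / (k + 1)) ^ k := by
    rcases k.eq_zero_or_pos with rfl | hk0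
    · simp
    · rw [← inv_pow]; congr 1; field_simp; ring
  calc Real.exp (-1) = (Real.exp 1)⁻¹ := Real.exp_neg 1
    _ ≤ ((1 + (k : ℝ)⁻¹) ^ k)⁻¹ := inv_anti₀ (by positivity) Real.one_add_inv_pow_le_exp
    _ = (1 - 1 / (k + 1)) ^ k := h1
    _ ≤ (1 - y) ^ k := by
        gcongr
        · rw [sub_nonneg, div_le_one hk]; linarith
        · rw [le_div_iff₀ hk]; exact hyk

/-- Symmetric lopsided local lemma, with probabilities on the uniform space `Ω` written as counts:
`hA` says that `P(A i | no A j occurs, j ∈ S) ≤ p`. -/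
theorem avoidSet_nonempty_of_lopsided [Nonempty Ω] (ℐ : Finset ι) (Γ : ι → Finset ι)
    {p D : ℝ} (hp : 0 ≤ p) (hΓ : ∀ i ∈ ℐ, (#((Γ i).erase i) : ℝ) ≤ D)
    (hA : ∀ i ∈ ℐ, ∀ S ⊆ ℐ, Disjoint S (Γ i) →
      (#(avoidSet A S ∩ A i) : ℝ) ≤ p * #(avoidSet A S))
    (hpD : Real.exp 1 * p * (D + 1) < 1) :
    (avoidSet A ℐ).Nonempty := by
  rcases ℐ.eq_empty_or_nonempty with rfl | ⟨i₀, hi₀⟩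
  · simp [avoidSet_empty]
  set x := Real.exp 1 * p
  have hx0 : 0 ≤ x := by positivity
  have hx1 : x < 1 := by
    nlinarith [hΓ i₀ hi₀, (#((Γ i₀).erase i₀)).cast_nonneg (α := ℝ)]
  have hpx : ∀ i ∈ ℐ, p ≤ x * (1 - x) ^ #((Γ i).erase i) := fun i hi => by
    have hexp := exp_neg_one_le_one_sub_pow (y := x) (k := #((Γ i).erase i))
      (by nlinarith [hΓ i hi])
    calc p = x * Real.exp (-1) := by simp [x, Real.exp_neg, mul_comm]
      _ ≤ _ := by gcongr
  have hclaim := card_avoidSet_inter_le_of_lopsided ℐ Γ hx0 hx1.le hpx hA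
  have hpos := pow_mul_card_avoidSet_le (A := A) (U := ∅) (T := ℐ) hx1.le
    (disjoint_empty_left _) fun j hj V _ hV _ => hclaim V (by simpa using hV) j hj
  rw [empty_union, avoidSet_empty, card_univ] at hpos
  have hΩ : (0 : ℝ) < Fintype.card Ω := by exact_mod_cast Fintype.card_pos
  have : (0 : ℝ) < #(avoidSet A ℐ) := hpos.trans_lt' (by have := sub_pos.mpr hx1; positivity)
  exact card_pos.mp (by exact_mod_cast this)

end LocalLemma

section Switching

variable {V β : Type*} [DecidableEq β]

/-- Induction on `#(N \ M)`: each transposition of a point of `N \ M` with a point of `M \ N`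
lowers it by one. -/
lemma exists_perm_image_eq_of_card_eq (N M : Finset β) (h : #N = #M) :
    ∃ π : Equiv.Perm β, N.image π = M ∧ ∀ y, y ∉ N → y ∉ M → π y = y := by
  obtain ⟨k, hk⟩ : ∃ k, #(N \ M) = k := ⟨_, rfl⟩
  induction k using Nat.strong_induction_on generalizing N with
  | _ k ih =>
  rcases (N \ M).eq_empty_or_nonempty with hNM | ⟨a, ha⟩
  · have hsub : N ⊆ M := sdiff_eq_empty_iff_subset.mp hNM
    exact ⟨1, by simpa using eq_of_subset_of_card_le hsub h.ge, fun _ _ _ => rfl⟩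
  obtain ⟨b, hb⟩ : (M \ N).Nonempty := by
    rw [← card_pos, ← card_sdiff_comm h]; exact card_pos.mpr ⟨a, ha⟩
  rw [mem_sdiff] at ha hb
  set τ := Equiv.swap a b
  have hN' : #(N.image τ) = #M := by rw [card_image_of_injective _ τ.injective, h]
  have hmem : ∀ y, y ∈ N.image τ ↔ τ y ∈ N := fun y =>
    ⟨fun hy => by obtain ⟨z, hz, rfl⟩ := mem_image.mp hy; simpa [τ] using hz,
      fun hy => mem_image.mpr ⟨τ y, hy, Equiv.swap_apply_self _ _ _⟩⟩
  have hlt : #(N.image τ \ M) < k := by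
    rw [← hk]
    refine card_lt_card ⟨fun y hy => ?_, fun hsub => ?_⟩
    · rw [mem_sdiff, hmem] at hy
      rw [mem_sdiff]
      refine ⟨?_, hy.2⟩
      rcases eq_or_ne y a with rfl | hya
      · exact ha.1
      rcases eq_or_ne y b with rfl | hyb
      · exact absurd hb.1 hy.2
      simpa [τ, Equiv.swap_apply_of_ne_of_ne hya hyb] using hy.1
    · have := (mem_sdiff.mp (hsub (mem_sdiff.mpr ha))).1
      rw [hmem, Equiv.swap_apply_left] at this
      exact hb.2 this
  obtain ⟨π, hπ, hfix⟩ := ih _ hlt (N.image τ) hN' rfl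
  refine ⟨τ.trans π, ?_, fun y hyN hyM => ?_⟩
  · rw [← hπ, image_image]; rfl
  · have hya : y ≠ a := fun h => hyN (h ▸ ha.1)
    have hyb : y ≠ b := fun h => hyM (h ▸ hb.1)
    have hτy : τ y = y := Equiv.swap_apply_of_ne_of_ne hya hyb
    simp only [Equiv.trans_apply, hτy]
    exact hfix y (by rwa [hmem, hτy]) hyM

lemma image_eq_of_disjoint {π : Equiv.Perm β} {N M : Finset β} (hπ : N.image π = M)
    (hfix : ∀ y, y ∉ N → y ∉ M → π y = y) {X Y : Finset β} (hX : Disjoint X N)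
    (hY : Disjoint Y N) (h : X.image π = Y) : X = Y := by
  have hπM : ∀ y, π y ∈ M → y ∈ N := fun y hy => by
    obtain ⟨z, hz, hzy⟩ := mem_image.mp (hπ ▸ hy)
    exact π.injective hzy ▸ hz
  have hid : ∀ y ∈ X, π y = y := fun y hy => by
    have hyN := disjoint_left.mp hX hy
    have hπyN := disjoint_left.mp hY (h ▸ mem_image_of_mem π hy)
    by_cases hyM : y ∈ M
    · have hπyM : π y ∉ M := fun h' => hyN (hπM y h')
      exact π.injective (hfix (π y) hπyN hπyM)
    · exact hfix y hyN hyM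
  rw [← h, image_congr hid, image_id']

variable [Fintype β]

/-- Switching: `σ ↦ σ.trans π` injects the bijections of `B` sending `P` onto `N` into those
sending `P` onto `M`, for each of the `C(|β|, |P|)` possible sets `M`. -/
lemma card_filter_image_eq_mul_choose_le (B : Finset (V ≃ β)) (P : Finset V) (N : Finset β)
    (hB : ∀ M : Finset β, #M = #P → ∃ π : Equiv.Perm β,
      N.image π = M ∧ ∀ σ ∈ B, P.image σ = N → σ.trans π ∈ B) :
    #(B.filter fun σ : V ≃ β => P.image σ = N) * (Fintype.card β).choose #P ≤ #B := by
  set fiber := fun M : Finset β => B.filter fun σ : V ≃ β => P.image σ = M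
  have hfib : ∀ M ∈ powersetCard #P univ, #(fiber N) ≤ #(fiber M) := fun M hM => by
    obtain ⟨π, hπ, hBπ⟩ := hB M (mem_powersetCard.mp hM).2
    refine card_le_card_of_injOn (·.trans π) (fun σ hσ => ?_)
      fun σ _ σ' _ h => Equiv.ext fun v => π.injective (congrArg (· v) h)
    rw [coe_filter] at hσ
    refine mem_filter.mpr ⟨hBπ σ hσ.1 hσ.2, ?_⟩
    rw [Equiv.coe_trans, ← image_image, hσ.2, hπ]
  calc #(fiber N) * (Fintype.card β).choose #P = ∑ _M ∈ powersetCard #P univ, #(fiber N) := by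
        simp [mul_comm]
    _ ≤ ∑ M ∈ powersetCard #P univ, #(fiber M) := sum_le_sum hfib
    _ = #B := (card_eq_sum_card_fiberwise fun σ _ => mem_powersetCard.mpr
        ⟨subset_univ _, card_image_of_injective P σ.injective⟩).symm

end Switching

section RandomBijection

variable {ι V β : Type*} [Fintype V] [Fintype β] [DecidableEq V] [DecidableEq β]

def imageEvent (P : ι → Finset V) (N : ι → Finset β) (j : ι) : Finset (V ≃ β) :=
  {σ | (P j).image σ = N j}

/-- A switching that moves `N i` and fixes everything outside `N i ∪ M` leaves each `σ (P j)`
with `j ∈ S` in place, so it preserves avoiding the events of `S`. -/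
lemma card_avoidSet_inter_imageEvent_mul_choose_le [DecidableEq ι] (P : ι → Finset V)
    (N : ι → Finset β) (i : ι) (hi : #(N i) = #(P i)) (S : Finset ι)
    (hS : ∀ j ∈ S, Disjoint (P i) (P j) ∧ Disjoint (N i) (N j)) :
    #(avoidSet (imageEvent P N) S ∩ imageEvent P N i) * (Fintype.card β).choose #(P i)
      ≤ #(avoidSet (imageEvent P N) S) := by
  have hinter : avoidSet (imageEvent P N) S ∩ imageEvent P N i
      = (avoidSet (imageEvent P N) S).filter fun σ : V ≃ β => (P i).image σ = N i := by
    ext σ; simp [imageEvent]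
  rw [hinter]
  refine card_filter_image_eq_mul_choose_le _ _ _ fun M hM => ?_
  obtain ⟨π, hπ, hfix⟩ := exists_perm_image_eq_of_card_eq (N i) M (hi.trans hM.symm)
  refine ⟨π, hπ, fun σ hσ hσi => mem_filter.mpr ⟨mem_univ _, fun j hj hσj => ?_⟩⟩
  have hσj : ((P j).image σ).image π = N j := by
    rw [image_image]; exact mem_filter.mp hσj |>.2
  have hdisj : Disjoint ((P j).image σ) (N i) :=
    hσi ▸ (disjoint_image σ.injective).mpr (hS j hj).1.symm
  exact (mem_filter.mp hσ).2 j hj (mem_filter.mpr ⟨mem_univ _,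
    image_eq_of_disjoint hπ hfix hdisj (hS j hj).2.symm hσj⟩)

end RandomBijection

section Hypergraph

variable {α β : Type*} [DecidableEq α] [DecidableEq β]

lemma card_filter_not_disjoint_le_card_mul (s : Finset β) {𝒩 : Finset (Finset β)} {y : ℝ}
    (hy : ∀ v, (#{N ∈ 𝒩 | v ∈ N} : ℝ) ≤ y) :
    (#{N ∈ 𝒩 | ¬Disjoint s N} : ℝ) ≤ #s * y := by
  have hsub : {N ∈ 𝒩 | ¬Disjoint s N} ⊆ s.biUnion fun v => {N ∈ 𝒩 | v ∈ N} :=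
    fun N hN => by
      obtain ⟨hN𝒩, hsN⟩ := mem_filter.mp hN
      obtain ⟨v, hvs, hvN⟩ := not_disjoint_iff.mp hsN
      exact mem_biUnion.mpr ⟨v, hvs, mem_filter.mpr ⟨hN𝒩, hvN⟩⟩
  calc (#{N ∈ 𝒩 | ¬Disjoint s N} : ℝ) ≤ ∑ v ∈ s, (#{N ∈ 𝒩 | v ∈ N} : ℝ) := by
        exact_mod_cast (card_le_card hsub).trans card_biUnion_le
    _ ≤ ∑ _v ∈ s, y := sum_le_sum fun v _ => hy v
    _ = #s * y := by simp

lemma card_filter_not_disjoint_le_succ {E : Finset (Finset α)} {F : Finset α} {d : ℕ}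
    (hd : #{F' ∈ E | F' ≠ F ∧ (F ∩ F').Nonempty} ≤ d) :
    #{F' ∈ E | ¬Disjoint F F'} ≤ d + 1 := by
  refine (card_le_card (t := insert F {F' ∈ E | F' ≠ F ∧ (F ∩ F').Nonempty})
    fun F' hF' => ?_).trans ((card_insert_le F _).trans (by omega))
  obtain ⟨hF'E, hFF'⟩ := mem_filter.mp hF'
  by_cases h : F' = F
  · exact h ▸ mem_insert_self _ _
  · exact mem_insert_of_mem (mem_filter.mpr ⟨hF'E, h, not_disjoint_iff_nonempty_inter.mp hFF'⟩)

variable [Fintype β]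

def nonEdges (r : ℕ) (E_H : Finset (Finset β)) : Finset (Finset β) :=
  powersetCard r univ \ E_H

lemma card_eq_of_mem_nonEdges {r : ℕ} {E_H : Finset (Finset β)} {N : Finset β}
    (hN : N ∈ nonEdges r E_H) : #N = r :=
  (mem_powersetCard.mp (mem_sdiff.mp hN).1).2

lemma card_filter_mem_nonEdges_le {r : ℕ} (hr : 1 ≤ r) {E_H : Finset (Finset β)}
    (hHr : ∀ F ∈ E_H, #F = r) {x : ℝ} (v : β)
    (hdeg : (1 - x) * ((Fintype.card β - 1).choose (r - 1) : ℝ) ≤ #{F ∈ E_H | v ∈ F}) :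
    (#{N ∈ nonEdges r E_H | v ∈ N} : ℝ) ≤ x * (Fintype.card β - 1).choose (r - 1) := by
  have hsub : {F ∈ E_H | v ∈ F} ⊆ {N ∈ powersetCard r (univ : Finset β) | v ∈ N} :=
    filter_subset_filter _ fun F hF => mem_powersetCard.mpr ⟨subset_univ F, hHr F hF⟩
  have hall : #{N ∈ powersetCard r (univ : Finset β) | v ∈ N}
      ≤ (Fintype.card β - 1).choose (r - 1) := by
    have h := filter_powersetCard_subset {v} univ r (subset_univ _) (by simpa using hr)
    simp only [singleton_subset_iff] at h
    rw [h]
    refine card_image_le.trans ?_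
    simp [card_sdiff]
  have hsplit : {N ∈ nonEdges r E_H | v ∈ N}
      = {N ∈ powersetCard r (univ : Finset β) | v ∈ N} \ {F ∈ E_H | v ∈ F} := by
    ext N; simp only [nonEdges, mem_filter, mem_sdiff]; tauto
  have hall' : (#{N ∈ powersetCard r (univ : Finset β) | v ∈ N} : ℝ)
      ≤ (Fintype.card β - 1).choose (r - 1) := by exact_mod_cast hall
  rw [hsplit, card_sdiff_of_subset hsub, Nat.cast_sub (card_le_card hsub)]
  linarith

lemma card_mul_le_of_card_filter_mem_le {𝒩 : Finset (Finset β)} {r : ℕ}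
    (h𝒩 : ∀ N ∈ 𝒩, #N = r) {y : ℝ} (hy : ∀ v, (#{N ∈ 𝒩 | v ∈ N} : ℝ) ≤ y) :
    (#𝒩 * r : ℝ) ≤ Fintype.card β * y := by
  have hcount : #𝒩 * r = ∑ v : β, #{N ∈ 𝒩 | v ∈ N} :=
    calc #𝒩 * r = ∑ N ∈ 𝒩, #(univ.bipartiteBelow (fun v N => v ∈ N) N) := by
          simp [bipartiteBelow, sum_congr rfl h𝒩, mul_comm]
      _ = ∑ v : β, #{N ∈ 𝒩 | v ∈ N} :=
          (sum_card_bipartiteAbove_eq_sum_card_bipartiteBelow _).symm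
  calc (#𝒩 * r : ℝ) = ∑ v : β, (#{N ∈ 𝒩 | v ∈ N} : ℝ) := by exact_mod_cast hcount
    _ ≤ ∑ _v : β, y := sum_le_sum fun v _ => hy v
    _ = Fintype.card β * y := by simp

lemma one_le_of_min_degree {r : ℕ} {E_H : Finset (Finset β)} (hHr : ∀ F ∈ E_H, #F = r)
    {x : ℝ} (hx : x < 1) {v : β}
    (hv : (1 - x) * ((Fintype.card β - 1).choose (r - 1) : ℝ) ≤ #{F ∈ E_H | v ∈ F}) :
    1 ≤ r := by
  by_contra! hr
  have hvdeg : {F ∈ E_H | v ∈ F} = ∅ := filter_eq_empty_iff.mpr fun F hF hvF => by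
    simp [card_eq_zero.mp ((hHr F hF).trans (by omega))] at hvF
  simp only [hvdeg, show r - 1 = 0 by omega, Nat.choose_zero_right, Nat.cast_one, mul_one,
    card_empty, Nat.cast_zero, sub_nonpos] at hv
  linarith

lemma Nat.mul_choose_sub_one_eq_choose_mul {n r : ℕ} (hr : 1 ≤ r) :
    n * (n - 1).choose (r - 1) = n.choose r * r := by
  obtain ⟨k, rfl⟩ := Nat.exists_eq_add_of_le' hr
  cases n with
  | zero => simp
  | succ n => simpa using Nat.add_one_mul_choose_eq n k

lemma card_nonEdges_le {r : ℕ} (hr : 1 ≤ r) {E_H : Finset (Finset β)}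
    (hHr : ∀ F ∈ E_H, #F = r) {x : ℝ}
    (hdeg : ∀ v,
      (1 - x) * ((Fintype.card β - 1).choose (r - 1) : ℝ) ≤ #{F ∈ E_H | v ∈ F}) :
    (#(nonEdges r E_H) : ℝ) ≤ x * (Fintype.card β).choose r := by
  have hcount : (#(nonEdges r E_H) * r : ℝ) ≤ _ :=
    card_mul_le_of_card_filter_mem_le (fun _ => card_eq_of_mem_nonEdges)
      fun v => card_filter_mem_nonEdges_le hr hHr v (hdeg v)
  have hchoose : (Fintype.card β : ℝ) * (Fintype.card β - 1).choose (r - 1)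
      = (Fintype.card β).choose r * r := by
    exact_mod_cast Nat.mul_choose_sub_one_eq_choose_mul hr
  refine le_of_mul_le_mul_right (hcount.trans_eq ?_) (by exact_mod_cast hr)
  rw [mul_left_comm, hchoose, mul_assoc]

end Hypergraph

section Packing

open Function (Embedding)

variable {α β : Type*} [DecidableEq β] {q : ℕ}

lemma hasPerfectPacking_of_equiv {E_G : Finset (Finset α)} {E_H : Finset (Finset β)}
    (σ : Fin q × α ≃ β)
    (h : ∀ t, ∀ F ∈ E_G, (F.map (Embedding.sectR t α)).image σ ∈ E_H) :
    HasPerfectPacking E_G E_H := by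
  refine ⟨q, fun t => (Embedding.sectR t α).trans σ.toEmbedding,
    fun t t' htt' a a' h => htt' (congrArg Prod.fst (σ.injective h)),
    fun b => ⟨(σ.symm b).1, (σ.symm b).2, by simp⟩, fun t F hF => ?_⟩
  rw [← map_map, map_eq_image]
  exact h t F hF

variable [DecidableEq α]

/-- The triple `i = (t, F, N)` indexes the event that copy `t` of `G` places its edge `F`
exactly onto `N`; these are the positions of `F` in copy `t`. -/
def blockPositions (i : Fin q × Finset α × Finset β) : Finset (Fin q × α) :=
  i.2.1.map (Embedding.sectR i.1 α)

def conflicts (ℐ : Finset (Fin q × Finset α × Finset β))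
    (i : Fin q × Finset α × Finset β) : Finset (Fin q × Finset α × Finset β) :=
  {j ∈ ℐ | (i.1 = j.1 ∧ ¬Disjoint i.2.1 j.2.1) ∨ ¬Disjoint i.2.2 j.2.2}

lemma disjoint_of_notMem_conflicts {ℐ : Finset (Fin q × Finset α × Finset β)}
    {i j : Fin q × Finset α × Finset β} (hj : j ∈ ℐ) (h : j ∉ conflicts ℐ i) :
    Disjoint (blockPositions i) (blockPositions j) ∧ Disjoint i.2.2 j.2.2 := by
  simp only [conflicts, mem_filter, hj, true_and, not_or, not_and, not_not] at h
  refine ⟨disjoint_left.mpr ?_, h.2⟩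
  rintro ⟨t, a⟩ hai haj
  simp only [blockPositions, mem_map, Embedding.sectR_apply, Prod.mk.injEq] at hai haj
  obtain ⟨a, ha, rfl, rfl⟩ := hai
  obtain ⟨a', ha', hji, rfl⟩ := haj
  exact disjoint_left.mp (h.1 hji.symm) ha ha'

lemma card_conflicts_le (E_G : Finset (Finset α)) (𝒩 : Finset (Finset β))
    (i : Fin q × Finset α × Finset β) :
    #(conflicts (univ ×ˢ E_G ×ˢ 𝒩) i)
      ≤ #{F ∈ E_G | ¬Disjoint i.2.1 F} * #𝒩
        + q * #E_G * #{N ∈ 𝒩 | ¬Disjoint i.2.2 N} := by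
  rw [conflicts, filter_or]
  refine (card_union_le _ _).trans (add_le_add ?_ ?_)
  · calc _ ≤ #({i.1} ×ˢ {F ∈ E_G | ¬Disjoint i.2.1 F} ×ˢ 𝒩) :=
          card_le_card fun j hj => by
            simp only [mem_filter, mem_product, mem_univ, true_and] at hj
            simp [hj.1.2, hj.1.1, hj.2.1, hj.2.2]
      _ = _ := by simp
  · calc _ ≤ #((univ : Finset (Fin q)) ×ˢ E_G ×ˢ {N ∈ 𝒩 | ¬Disjoint i.2.2 N}) :=
          card_le_card fun j hj => by
            simp only [mem_filter, mem_product, mem_univ, true_and] at hj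
            simp [hj.1.1, hj.1.2, hj.2]
      _ = _ := by simp [mul_assoc]

variable [Fintype β] {E_G : Finset (Finset α)} {E_H : Finset (Finset β)} {r : ℕ}

lemma card_conflicts_erase_le {s d : ℕ} {x : ℝ} (hs : 0 < s) (hqs : q * s = Fintype.card β)
    (hr : 1 ≤ r) (hHr : ∀ F ∈ E_H, #F = r)
    (hd : ∀ F ∈ E_G, #{F' ∈ E_G | F' ≠ F ∧ (F ∩ F').Nonempty} ≤ d)
    (hdeg : ∀ v,
      (1 - x) * ((Fintype.card β - 1).choose (r - 1) : ℝ) ≤ #{F ∈ E_H | v ∈ F})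
    {i : Fin q × Finset α × Finset β} (hi : i ∈ univ ×ˢ E_G ×ˢ nonEdges r E_H) :
    (#((conflicts (univ ×ˢ E_G ×ˢ nonEdges r E_H) i).erase i) : ℝ)
      ≤ x * (Fintype.card β).choose r * (d + 1 + r ^ 2 * #E_G / s) - 1 := by
  set C' : ℝ := (((Fintype.card β - 1).choose (r - 1) : ℕ) : ℝ)
  obtain ⟨hF, hN⟩ : i.2.1 ∈ E_G ∧ i.2.2 ∈ nonEdges r E_H := by simpa using hi
  have hself : i ∈ conflicts (univ ×ˢ E_G ×ˢ nonEdges r E_H) i :=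
    mem_filter.mpr ⟨hi, Or.inr (by
      rw [disjoint_self, bot_eq_empty, ← card_eq_zero, card_eq_of_mem_nonEdges hN]; omega)⟩
  have hEG : (#{F ∈ E_G | ¬Disjoint i.2.1 F} : ℝ) ≤ d + 1 := by
    exact_mod_cast card_filter_not_disjoint_le_succ (hd _ hF)
  have hmeet : (#{N ∈ nonEdges r E_H | ¬Disjoint i.2.2 N} : ℝ) ≤ r * (x * C') := by
    simpa [card_eq_of_mem_nonEdges hN] using card_filter_not_disjoint_le_card_mul i.2.2
      fun v => card_filter_mem_nonEdges_le hr hHr v (hdeg v)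
  have hconf : (#(conflicts (univ ×ˢ E_G ×ˢ nonEdges r E_H) i) : ℝ)
      ≤ (d + 1) * #(nonEdges r E_H) + q * #E_G * (r * (x * C')) :=
    calc _ ≤ (#{F ∈ E_G | ¬Disjoint i.2.1 F} * #(nonEdges r E_H)
          + q * #E_G * #{N ∈ nonEdges r E_H | ¬Disjoint i.2.2 N} : ℝ) := by
          exact_mod_cast card_conflicts_le E_G (nonEdges r E_H) i
      _ ≤ _ := by gcongr
  have hchoose : (Fintype.card β : ℝ) * C' = (Fintype.card β).choose r * r := by
    simp only [C']; exact_mod_cast Nat.mul_choose_sub_one_eq_choose_mul hr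
  have hq : (q : ℝ) = Fintype.card β / s := by
    rw [eq_div_iff (by positivity)]; exact_mod_cast hqs
  rw [card_erase_of_mem hself, Nat.cast_sub (card_pos.mpr ⟨i, hself⟩), Nat.cast_one]
  have hNE := card_nonEdges_le hr hHr hdeg
  calc _ ≤ (d + 1) * (x * (Fintype.card β).choose r) + q * #E_G * (r * (x * C')) - 1 := by
        linarith [mul_le_mul_of_nonneg_left hNE (by positivity : (0 : ℝ) ≤ d + 1)]
    _ = _ := by rw [hq]; field_simp; linear_combination (x * #E_G * r) * hchoose

variable [Fintype α]

abbrev placementEvent : Fin q × Finset α × Finset β → Finset (Fin q × α ≃ β) :=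
  imageEvent blockPositions (·.2.2)

lemma card_avoidSet_inter_le_of_disjoint_conflicts (hGr : ∀ F ∈ E_G, #F = r)
    {i : Fin q × Finset α × Finset β} (hi : i ∈ univ ×ˢ E_G ×ˢ nonEdges r E_H)
    {S : Finset (Fin q × Finset α × Finset β)} (hS : S ⊆ univ ×ˢ E_G ×ˢ nonEdges r E_H)
    (hSi : Disjoint S (conflicts (univ ×ˢ E_G ×ˢ nonEdges r E_H) i)) :
    (#(avoidSet placementEvent S ∩ placementEvent i) : ℝ)
      ≤ ((Fintype.card β).choose r : ℝ)⁻¹ * #(avoidSet placementEvent S) := by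
  obtain ⟨hF, hN⟩ : i.2.1 ∈ E_G ∧ i.2.2 ∈ nonEdges r E_H := by simpa using hi
  have hNr : #i.2.2 = r := card_eq_of_mem_nonEdges hN
  have hPr : #(blockPositions i) = r := (card_map _).trans (hGr _ hF)
  have hcount := card_avoidSet_inter_imageEvent_mul_choose_le blockPositions (·.2.2) i
    (hNr.trans hPr.symm) S fun j hj =>
      disjoint_of_notMem_conflicts (hS hj) (disjoint_left.mp hSi hj)
  have hC : (0 : ℝ) < (Fintype.card β).choose r :=
    Nat.cast_pos.mpr (Nat.choose_pos (hNr ▸ card_le_univ _))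
  rw [hPr] at hcount
  rw [inv_mul_eq_div, le_div_iff₀ hC]
  exact_mod_cast hcount

lemma hasPerfectPacking_of_mem_avoidSet (hGr : ∀ F ∈ E_G, #F = r) {σ : Fin q × α ≃ β}
    (hσ : σ ∈ avoidSet placementEvent (univ ×ˢ E_G ×ˢ nonEdges r E_H)) :
    HasPerfectPacking E_G E_H := by
  refine hasPerfectPacking_of_equiv σ fun t F hF => ?_
  by_contra hnot
  have hN : (F.map (Embedding.sectR t α)).image σ ∈ nonEdges r E_H :=
    mem_sdiff.mpr ⟨mem_powersetCard.mpr ⟨subset_univ _, by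
      rw [card_image_of_injective _ σ.injective, card_map, hGr F hF]⟩, hnot⟩
  exact mem_avoidSet.mp hσ (t, F, (F.map (Embedding.sectR t α)).image σ) (by simp [hF, hN])
    (mem_filter.mpr ⟨mem_univ _, rfl⟩)

end Packing

/-- A sufficient minimum-degree condition for a perfect `G`-packing: if `G` is an
`r`-uniform hypergraph with `s` vertices and `m` edges, each edge intersecting at most
`d` other edges, `H` is an `r`-uniform hypergraph with `n` vertices where `s ∣ n`, every
vertex of `H` has degree at least `(1 - x) * C(n-1, r-1)`, and
`x < 1 / (e * (d + 1 + r² * m / s))`, then `H` has a perfect `G`-packing. -/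
theorem perfect_packing_of_min_degree {α β : Type*} [Fintype α] [Fintype β]
    [DecidableEq α] [DecidableEq β] (r s n m d : ℕ) (x : ℝ)
    (E_G : Finset (Finset α)) (E_H : Finset (Finset β))
    (hGr : ∀ F ∈ E_G, F.card = r) (hHr : ∀ F ∈ E_H, F.card = r)
    (hs : Fintype.card α = s) (hn : Fintype.card β = n) (hsn : s ∣ n)
    (hm : E_G.card = m)
    (hd : ∀ F ∈ E_G, (E_G.filter fun F' => F' ≠ F ∧ (F ∩ F').Nonempty).card ≤ d)
    (hdeg : ∀ v : β,
      (1 - x) * ((n - 1).choose (r - 1) : ℝ) ≤ ((E_H.filter fun F => v ∈ F).card : ℝ))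
    (hx : x < 1 / (Real.exp 1 * ((d : ℝ) + 1 + (r : ℝ) ^ 2 * (m : ℝ) / (s : ℝ)))) :
    HasPerfectPacking E_G E_H := by
  subst hs hn hm
  rcases isEmpty_or_nonempty β with hβ | ⟨⟨v⟩⟩
  · exact hasPerfectPacking_of_equiv (q := 0) (Fintype.equivOfCardEq (by simp)) fun t => t.elim0
  set D := (d : ℝ) + 1 + (r : ℝ) ^ 2 * #E_G / Fintype.card α
  have hD : 1 ≤ D := le_add_of_le_of_nonneg (by simp) (by positivity)
  have hxD : x * (Real.exp 1 * D) < 1 := (lt_div_iff₀ (by positivity)).mp hx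
  have hr : 1 ≤ r := one_le_of_min_degree hHr (v := v) (by
    nlinarith [one_le_mul_of_one_le_of_one_le (Real.one_le_exp zero_le_one) hD]) (hdeg v)
  have hqs := Nat.div_mul_cancel hsn
  have : Nonempty (Fin (Fintype.card β / Fintype.card α) × α ≃ β) :=
    ⟨Fintype.equivOfCardEq (by simp [hqs])⟩
  have hpD : Real.exp 1 * ((Fintype.card β).choose r : ℝ)⁻¹
      * (x * (Fintype.card β).choose r * D - 1 + 1) < 1 := by
    rw [sub_add_cancel]
    rcases eq_or_ne ((Fintype.card β).choose r) 0 with hC | hC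
    · simp [hC]
    · convert hxD using 1
      field_simp
  obtain ⟨σ, hσ⟩ := avoidSet_nonempty_of_lopsided (A := placementEvent) _
    (conflicts _) (by positivity)
    (fun i hi => card_conflicts_erase_le
      (Nat.pos_of_dvd_of_pos hsn (Fintype.card_pos_iff.mpr ⟨v⟩)) hqs hr hHr hd hdeg hi)
    (fun i hi S hS hSi => card_avoidSet_inter_le_of_disjoint_conflicts hGr hi hS hSi) hpD
  exact hasPerfectPacking_of_mem_avoidSet hGr hσ
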